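/- Every (7/3)-power-free symmetric infinite binary word u has the same subword complexity as the Thue–Morse word: p_u(n) = p_t(n) for all n ≥ 0. -/

import Mathlib

/-- The factor of the infinite word `u` of length `m` starting at position `i`. -/
def factorAt {k : ℕ} (u : ℕ → Fin k) (i m : ℕ) : List (Fin k) :=
  (List.range m).map fun j => u (i + j)

/-- `v` is a factor of the infinite word `u`. -/
def IsFactor {k : ℕ} (v : List (Fin k)) (u : ℕ → Fin k) : Prop :=
  ∃ i, v = factorAt u i v.length

/-- Subword complexity: the number of distinct factors of length `n`. -/
noncomputable def complexity {k : ℕ} (u : ℕ → Fin k) (n : ℕ) : ℕ :=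
  Set.ncard {v : List (Fin k) | v.length = n ∧ IsFactor v u}

/-- The word `w` has period `q` (`1 ≤ q ≤ |w|`, and `w(i) = w(i+q)` whenever defined). -/
def HasPer {A : Type*} (w : List A) (q : ℕ) : Prop :=
  1 ≤ q ∧ q ≤ w.length ∧ ∀ i, i + q < w.length → w[i]? = w[i + q]?

/-- The minimal period of a finite word. -/
noncomputable def minPer {A : Type*} (w : List A) : ℕ := sInf {q | HasPer w q}

/-- The exponent of a finite word: its length divided by its minimal period. -/
noncomputable def exponent {A : Type*} (w : List A) : ℝ := (w.length : ℝ) / (minPer w : ℝ)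

/-- `u` is `α`-power-free: no nonempty factor has exponent `≥ α`. -/
def PowerFree {k : ℕ} (α : ℝ) (u : ℕ → Fin k) : Prop :=
  ∀ v : List (Fin k), v ≠ [] → IsFactor v u → exponent v < α

/-- `u` is `α⁺`-power-free: no nonempty factor has exponent `> α`. -/
def PowerFreePlus {k : ℕ} (α : ℝ) (u : ℕ → Fin k) : Prop :=
  ∀ v : List (Fin k), v ≠ [] → IsFactor v u → exponent v ≤ α

/-- Overlap-free means `2⁺`-power-free. -/
def OverlapFree {k : ℕ} (u : ℕ → Fin k) : Prop := PowerFreePlus 2 u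

/-- The Thue–Morse word: `t n` is the number of 1's, mod 2, in the binary expansion of `n`. -/
def thueMorse : ℕ → Fin 2 := fun n => Fin.ofNat 2 ((Nat.digits 2 n).count 1)

/-- A word is symmetric if its factor set is invariant under every permutation of the alphabet. -/
def SymmetricW {k : ℕ} (u : ℕ → Fin k) : Prop :=
  ∀ f : Equiv.Perm (Fin k), ∀ v : List (Fin k), IsFactor v u → IsFactor (v.map f) u

/-!
A 7/3-power-free binary word contains neither `aaa` nor `ababa`, and its doubles
`u q = u (q + 1)` with `q ≥ 1` all sit at positions of one parity (consecutive ones are 2 or 4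
apart, since a gap of 3 produces a factor `baabaab` of exponent 7/3). So, after dropping at most
two letters, the word is `μ(w)` with `w` again 7/3-power-free; symmetry passes to `w` too, because
a complementary occurrence at odd distance would make `w` contain a cube.

By induction on the length, every length-`n` factor of `u` is a factor of `μ(t) = t`: length-`n`
windows of `μ(w)` are images of length-`(n / 2 + 1)` windows of `w`, and by symmetry every factor
of `u` also occurs after the dropped letters (otherwise a prefix of `u` alternates). Conversely,
every prefix `t[0, 2^K)` occurs in `u`, being `μ` of the prefix `t[0, 2^(K-1))` of `w`.
-/

def WindowsIn {α : Type*} (n : ℕ) (u v : ℕ → α) : Prop :=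
  ∀ i, ∃ j, ∀ l < n, u (i + l) = v (j + l)

section WindowsIn

variable {α : Type*} {n m : ℕ} {u v w : ℕ → α}

theorem WindowsIn.mono (h : WindowsIn n u v) (hmn : m ≤ n) : WindowsIn m u v :=
  fun i => (h i).imp fun _ hj l hl => hj l (hl.trans_le hmn)

theorem WindowsIn.trans (huv : WindowsIn n u v) (hvw : WindowsIn n v w) : WindowsIn n u w := by
  intro i
  obtain ⟨j, hj⟩ := huv i
  obtain ⟨k, hk⟩ := hvw j
  exact ⟨k, fun l hl => (hj l hl).trans (hk l hl)⟩

theorem windowsIn_shift {k k' : ℕ} (h : k ≤ k') :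
    WindowsIn n (fun i => u (k' + i)) (fun i => u (k + i)) :=
  fun i => ⟨k' - k + i, fun l _ => by
    dsimp only; rw [show k' + (i + l) = k + (k' - k + i + l) by omega]⟩

end WindowsIn

theorem HasPer.minPer_le {A : Type*} {w : List A} {q : ℕ} (h : HasPer w q) : minPer w ≤ q :=
  Nat.sInf_le h

theorem HasPer.hasPer_minPer {A : Type*} {w : List A} {q : ℕ} (h : HasPer w q) :
    HasPer w (minPer w) :=
  Nat.sInf_mem (s := {q | HasPer w q}) ⟨q, h⟩

section Factors

variable {k n : ℕ} {u v : ℕ → Fin k}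

theorem isFactor_factorAt (u : ℕ → Fin k) (i m : ℕ) : IsFactor (factorAt u i m) u :=
  ⟨i, by simp [factorAt]⟩

theorem WindowsIn.isFactor {x : List (Fin k)} (h : WindowsIn x.length u v) (hx : IsFactor x u) :
    IsFactor x v := by
  obtain ⟨i, hi⟩ := hx
  obtain ⟨j, hj⟩ := h i
  exact ⟨j, hi.trans (List.map_congr_left fun l hl => hj l (List.mem_range.mp hl))⟩

theorem complexity_eq_of_windowsIn (huv : WindowsIn n u v) (hvu : WindowsIn n v u) :
    complexity u n = complexity v n := by
  unfold complexity
  congr 1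
  ext x
  refine and_congr_right fun hx => ?_
  subst hx
  exact ⟨huv.isFactor, hvu.isFactor⟩

theorem SymmetricW.windowsIn_perm (hs : SymmetricW u) (f : Equiv.Perm (Fin k)) (n : ℕ) :
    WindowsIn n (f ∘ u) u := by
  intro i
  obtain ⟨j, hj⟩ := hs f _ (isFactor_factorAt u i n)
  refine ⟨j, fun l hl => ?_⟩
  simpa [factorAt, hl] using congrArg (·[l]?) hj

theorem hasPer_factorAt_iff {i m q : ℕ} :
    HasPer (factorAt u i m) q ↔
      0 < q ∧ q ≤ m ∧ ∀ c, c + q < m → u (i + c) = u (i + c + q) := by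
  simp only [HasPer, factorAt, List.length_map, List.length_range, Nat.one_le_iff_ne_zero,
    ← Nat.pos_iff_ne_zero]
  refine and_congr_right fun _ => and_congr_right fun _ =>
    forall_congr' fun c => imp_congr_right fun hc => ?_
  simp [List.getElem?_range (show c < m by omega), List.getElem?_range hc, add_assoc]

theorem powerFree_iff {α : ℝ} :
    PowerFree α u ↔ ∀ i m q, 0 < q → q ≤ m →
      (∀ c, c + q < m → u (i + c) = u (i + c + q)) → (m : ℝ) / q < α := by
  constructor
  · intro hu i m q hq hqm hper
    have hP : HasPer (factorAt u i m) q := hasPer_factorAt_iff.2 ⟨hq, hqm, hper⟩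
    have hmin_pos : 0 < minPer (factorAt u i m) := (hasPer_factorAt_iff.1 hP.hasPer_minPer).1
    have hexp := hu _ (List.ne_nil_of_length_pos (by simp [factorAt]; omega))
      (isFactor_factorAt u i m)
    rw [exponent, show (factorAt u i m).length = m by simp [factorAt]] at hexp
    calc (m : ℝ) / q ≤ m / minPer (factorAt u i m) :=
          div_le_div_of_nonneg_left (by positivity) (by exact_mod_cast hmin_pos)
            (by exact_mod_cast hP.minPer_le)
      _ < α := hexp
  · rintro H x hx ⟨i, hi⟩
    have hm : 0 < x.length := List.length_pos_iff.2 hx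
    have hP : HasPer (factorAt u i x.length) x.length :=
      hasPer_factorAt_iff.2 ⟨hm, le_rfl, fun c hc => by omega⟩
    obtain ⟨hp, hpm, hper⟩ := hasPer_factorAt_iff.1 hP.hasPer_minPer
    rw [exponent, hi]
    simpa [factorAt] using H i x.length _ hp hpm hper

theorem PowerFree.of_windowsIn {α : ℝ} (hv : PowerFree α v) (h : ∀ n, WindowsIn n u v) :
    PowerFree α u :=
  fun x hx hux => hv x hx ((h _).isFactor hux)

theorem PowerFree.shift {α : ℝ} (hu : PowerFree α u) (k : ℕ) :
    PowerFree α (fun i => u (k + i)) :=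
  hu.of_windowsIn fun n => by simpa using windowsIn_shift (u := u) (n := n) (Nat.zero_le k)

theorem PowerFree.three_mul_lt (hu : PowerFree (7 / 3) u) {i m q : ℕ} (hq : 0 < q) (hqm : q ≤ m)
    (hper : ∀ c, c + q < m → u (i + c) = u (i + c + q)) : 3 * m < 7 * q := by
  have h := powerFree_iff.1 hu i m q hq hqm hper
  rw [div_lt_iff₀ (by exact_mod_cast hq)] at h
  exact_mod_cast (by linarith : (3 * m : ℝ) < 7 * q)

end Factors

theorem Fin.rev_eq_iff_ne_two {a b : Fin 2} : a.rev = b ↔ b ≠ a := by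
  revert a b; decide

def ComplClosed (u : ℕ → Fin 2) : Prop := ∀ n, WindowsIn n (Fin.rev ∘ u) u

theorem SymmetricW.complClosed {u : ℕ → Fin 2} (hs : SymmetricW u) : ComplClosed u :=
  hs.windowsIn_perm Fin.revPerm

theorem ComplClosed.shift {u : ℕ → Fin 2} (hc : ComplClosed u) (k : ℕ) :
    ComplClosed (fun i => u (k + i)) := by
  intro n i
  obtain ⟨j, hj⟩ := hc (k + n) i
  exact ⟨j, fun l hl => by simpa [Nat.add_left_comm] using hj (k + l) (by omega)⟩

def muImage (w : ℕ → Fin 2) (n : ℕ) : Fin 2 :=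
  if n % 2 = 0 then w (n / 2) else (w (n / 2)).rev

section muImage

variable {w w' : ℕ → Fin 2}

theorem muImage_two_mul_add (w : ℕ → Fin 2) (i l : ℕ) :
    muImage w (2 * i + l) = muImage (fun k => w (i + k)) l := by
  simp only [muImage, show (2 * i + l) % 2 = l % 2 by omega,
    show (2 * i + l) / 2 = i + l / 2 by omega]

theorem muImage_two_mul (w : ℕ → Fin 2) (k : ℕ) : muImage w (2 * k) = w k := by
  simp [muImage]

theorem muImage_two_mul_add_one (w : ℕ → Fin 2) (k : ℕ) :
    muImage w (2 * k + 1) = (w k).rev := by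
  rw [muImage_two_mul_add]
  simp [muImage]

theorem eq_muImage {x : ℕ → Fin 2} (h : ∀ k, x (2 * k + 1) = (x (2 * k)).rev) :
    x = muImage fun k => x (2 * k) := by
  funext n
  obtain ⟨k, rfl | rfl⟩ := Nat.even_or_odd' n
  · rw [muImage_two_mul]
  · rw [muImage_two_mul_add_one, h]

theorem muImage_window {i j m : ℕ} (h : ∀ l < m, w (i + l) = w' (j + l)) :
    ∀ l < 2 * m, muImage w (2 * i + l) = muImage w' (2 * j + l) := by
  intro l hl
  rw [muImage_two_mul_add, muImage_two_mul_add]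
  simp only [muImage, h (l / 2) (by omega)]

theorem WindowsIn.muImage {n : ℕ} (h : WindowsIn (n / 2 + 1) w w') :
    WindowsIn n (muImage w) (muImage w') := by
  intro i
  obtain ⟨j, hj⟩ := h (i / 2)
  refine ⟨2 * j + i % 2, fun l hl => ?_⟩
  have := muImage_window hj (i % 2 + l) (by omega)
  rwa [← add_assoc, ← add_assoc, Nat.div_add_mod] at this

theorem PowerFree.of_muImage {α : ℝ} (hw : PowerFree α (muImage w)) : PowerFree α w := by
  rw [powerFree_iff] at hw ⊢
  intro i m q hq hqm hper
  have := hw (2 * i) (2 * m) (2 * q) (by omega) (by omega) fun c hc => by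
    rw [add_assoc, muImage_two_mul_add, muImage_two_mul_add]
    simp only [muImage, show (c + 2 * q) % 2 = c % 2 by omega,
      show (c + 2 * q) / 2 = c / 2 + q by omega, ← add_assoc, hper (c / 2) (by omega)]
  push_cast at this
  rwa [mul_div_mul_left _ _ two_ne_zero] at this

end muImage

namespace PowerFree

variable {u : ℕ → Fin 2}

theorem no_cube (hu : PowerFree (7 / 3) u) (p : ℕ) :
    ¬ (u p = u (p + 1) ∧ u (p + 1) = u (p + 2)) := by
  rintro ⟨h₁, h₂⟩
  have := hu.three_mul_lt (i := p) (m := 3) (q := 1) one_pos (by norm_num) fun c hc => by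
    obtain rfl | rfl : c = 0 ∨ c = 1 := by omega
    exacts [h₁, h₂]
  omega

theorem not_alternating (hu : PowerFree (7 / 3) u) (i : ℕ) :
    ¬ ∀ c < 4, u (i + c) ≠ u (i + c + 1) := by
  intro h
  have h0 := h 0 (by norm_num)
  have h1 := h 1 (by norm_num)
  have h2 := h 2 (by norm_num)
  have h3 := h 3 (by norm_num)
  simp only [add_zero, add_assoc, Nat.reduceAdd] at h0 h1 h2 h3
  have := hu.three_mul_lt (i := i) (m := 5) (q := 2) two_pos (by norm_num) fun c hc => by
    obtain rfl | rfl | rfl : c = 0 ∨ c = 1 ∨ c = 2 := by omega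
    all_goals simp only [add_zero, add_assoc, Nat.reduceAdd]; omega
  omega

theorem next_double (hu : PowerFree (7 / 3) u) {p : ℕ} (hp : 1 ≤ p) (h : u p = u (p + 1)) :
    u (p + 1) ≠ u (p + 2) ∧ u (p + 3) ≠ u (p + 4) ∧
      (u (p + 2) = u (p + 3) ∨ u (p + 4) = u (p + 5)) := by
  have h1 : u (p + 1) ≠ u (p + 2) := fun h1 => hu.no_cube p ⟨h, h1⟩
  have h3 : u (p + 3) ≠ u (p + 4) := by
    intro h3
    obtain ⟨p, rfl⟩ : ∃ p', p = p' + 1 := ⟨p - 1, by omega⟩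
    have h0 : u p ≠ u (p + 1) := fun h0 => hu.no_cube p ⟨h0, h⟩
    have h2 : u (p + 3) ≠ u (p + 4) := fun h2 => hu.no_cube (p + 3) ⟨h2, h3⟩
    have h4 : u (p + 5) ≠ u (p + 6) := fun h4 => hu.no_cube (p + 4) ⟨h3, h4⟩
    simp only [add_assoc, Nat.reduceAdd] at h h1 h3
    -- the factor `u p ⋯ u (p + 6)` is `b a a b a a b`, of exponent `7 / 3`
    have := hu.three_mul_lt (i := p) (m := 7) (q := 3) three_pos (by norm_num) fun c hc => by
      obtain rfl | rfl | rfl | rfl : c = 0 ∨ c = 1 ∨ c = 2 ∨ c = 3 := by omega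
      all_goals simp only [add_zero, add_assoc, Nat.reduceAdd]; omega
    omega
  refine ⟨h1, h3, ?_⟩
  by_contra! h24
  exact hu.not_alternating (p + 1) fun c hc => by
    obtain rfl | rfl | rfl | rfl : c = 0 ∨ c = 1 ∨ c = 2 ∨ c = 3 := by omega
    exacts [h1, h24.1, h3, h24.2]

theorem ne_of_odd_gap (hu : PowerFree (7 / 3) u) {p : ℕ} (hp : 1 ≤ p) (h : u p = u (p + 1))
    (d : ℕ) : u (p + 2 * d + 1) ≠ u (p + 2 * d + 2) := by
  induction d using Nat.strong_induction_on generalizing p with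
  | _ d ih =>
  rcases d with _ | _ | d
  · exact (hu.next_double hp h).1
  · exact (hu.next_double hp h).2.1
  · rcases (hu.next_double hp h).2.2 with h2 | h4
    · convert ih (d + 1) (by omega) (by omega) h2 using 3 <;> omega
    · convert ih d (by omega) (by omega) h4 using 3 <;> omega

theorem exists_shift_eq_muImage (hu : PowerFree (7 / 3) u) :
    ∃ off ≤ 2, ∃ w, (fun i => u (off + i)) = muImage w := by
  obtain ⟨p, hp, hpp⟩ : ∃ p, 1 ≤ p ∧ u p = u (p + 1) := by
    by_contra! h
    exact hu.not_alternating 1 fun c _ => h (1 + c) (by omega)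
  -- all doubles `u q = u (q + 1)` with `q ≥ 1` have the parity of `p`,
  -- so none starts at `off + 2 * k`
  refine ⟨p % 2 + 1, by omega, _,
    eq_muImage fun k => (Fin.rev_eq_iff_ne_two.2 fun hq => ?_).symm⟩
  rw [← add_assoc] at hq
  generalize hq_def : p % 2 + 1 + 2 * k = q at hq
  rcases lt_or_gt_of_ne (show q ≠ p by omega) with hqp | hpq
  · obtain ⟨d, rfl⟩ : ∃ d, p = q + 2 * d + 1 := ⟨(p - q) / 2, by omega⟩
    exact hu.ne_of_odd_gap (by omega) hq.symm d hpp
  · obtain ⟨d, rfl⟩ : ∃ d, q = p + 2 * d + 1 := ⟨(q - p) / 2, by omega⟩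
    exact hu.ne_of_odd_gap hp hpp d hq.symm

end PowerFree

theorem ComplClosed.of_muImage {w : ℕ → Fin 2} (hw : PowerFree (7 / 3) (muImage w))
    (hc : ComplClosed (muImage w)) : ComplClosed w := by
  intro n j
  obtain ⟨i, hi⟩ := hc (2 * max n 2) (2 * j)
  obtain ⟨d, rfl | rfl⟩ := Nat.even_or_odd' i
  · refine ⟨d, fun l hl => ?_⟩
    simpa [← mul_add, muImage_two_mul] using hi (2 * l) (by omega)
  · -- an odd shift would make `w` constant on a window of length `3`
    have e₀ : ∀ c < max n 2, w (j + c) = w (d + c) := fun c hc => by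
      have := hi (2 * c) (by omega)
      rwa [Function.comp_apply, ← mul_add, show 2 * d + 1 + 2 * c = 2 * (d + c) + 1 by ring,
        muImage_two_mul, muImage_two_mul_add_one, Fin.rev_inj] at this
    have e₁ : ∀ c < max n 2, w (j + c) = w (d + c + 1) := fun c hc => by
      have := hi (2 * c + 1) (by omega)
      rwa [Function.comp_apply, ← add_assoc, ← mul_add,
        show 2 * d + 1 + (2 * c + 1) = 2 * (d + c + 1) by ring,
        muImage_two_mul, muImage_two_mul_add_one, Fin.rev_rev] at this
    refine absurd ⟨?_, ?_⟩ (hw.of_muImage.no_cube d)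
    · simpa using (e₀ 0 (by omega)).symm.trans (e₁ 0 (by omega))
    · simpa using (e₀ 1 (by omega)).symm.trans (e₁ 1 (by omega))

theorem PowerFree.windowsIn_shift_two {u : ℕ → Fin 2} (hu : PowerFree (7 / 3) u)
    (hc : ComplClosed u) (n : ℕ) : WindowsIn n u (fun i => u (2 + i)) := by
  intro i
  by_cases hi : 2 ≤ i
  · exact ⟨i - 2, fun l _ => by dsimp only; rw [show 2 + (i - 2 + l) = i + l by omega]⟩
  obtain ⟨i', hi'⟩ := hc (max n 4) i
  by_cases hi'2 : 2 ≤ i'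
  · obtain ⟨j, hj⟩ := hc.shift 2 n (i' - 2)
    refine ⟨j, fun l hl => ?_⟩
    have := hj l hl
    simp only [Function.comp_apply, show 2 + (i' - 2 + l) = i' + l by omega, ← hi' l (by omega),
      Fin.rev_rev] at this
    exact this
  -- otherwise `{i, i'} = {0, 1}` and the prefix of `u` alternates
  exfalso
  have hne : ∀ l < max n 4, u (i' + l) ≠ u (i + l) := fun l hl =>
    Fin.rev_eq_iff_ne_two.1 (hi' l hl)
  have hii' : i ≠ i' := fun h => hne 0 (by omega) (by rw [h])
  apply hu.not_alternating 0
  intro c hc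
  rcases (by omega : i = 0 ∧ i' = 1 ∨ i = 1 ∧ i' = 0) with ⟨rfl, rfl⟩ | ⟨rfl, rfl⟩
  · simpa [add_comm] using (hne c (by omega)).symm
  · simpa [add_comm] using hne c (by omega)

theorem PowerFree.exists_shift_eq_muImage_of_complClosed {u : ℕ → Fin 2}
    (hu : PowerFree (7 / 3) u) (hc : ComplClosed u) :
    ∃ off ≤ 2, ∃ w, (fun i => u (off + i)) = muImage w ∧
      PowerFree (7 / 3) w ∧ ComplClosed w := by
  obtain ⟨off, hoff, w, hw⟩ := hu.exists_shift_eq_muImage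
  have hwμ : PowerFree (7 / 3) (muImage w) := hw ▸ hu.shift off
  exact ⟨off, hoff, w, hw, hwμ.of_muImage, .of_muImage hwμ (hw ▸ hc.shift off)⟩

theorem thueMorse_two_mul (n : ℕ) : thueMorse (2 * n) = thueMorse n := by
  rcases n.eq_zero_or_pos with rfl | hn
  · rfl
  · simp [thueMorse, Nat.digits_def' one_lt_two (show 0 < 2 * n by omega)]

theorem thueMorse_two_mul_add_one (n : ℕ) : thueMorse (2 * n + 1) = (thueMorse n).rev := by
  rw [thueMorse, thueMorse, Nat.digits_def' one_lt_two (Nat.succ_pos _),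
    show (2 * n + 1) % 2 = 1 by omega, show (2 * n + 1) / 2 = n by omega, List.count_cons_self]
  ext
  simp [Fin.val_rev]
  omega

theorem muImage_thueMorse : muImage thueMorse = thueMorse := by
  funext n
  obtain ⟨k, rfl | rfl⟩ := Nat.even_or_odd' n
  · rw [muImage_two_mul, thueMorse_two_mul]
  · rw [muImage_two_mul_add_one, thueMorse_two_mul_add_one]

theorem windowsIn_two_thueMorse (u : ℕ → Fin 2) : WindowsIn 2 u thueMorse := by
  intro i
  obtain ⟨r, -, h₀, h₁⟩ :
      ∃ r < 7, thueMorse r = u i ∧ thueMorse (r + 1) = u (i + 1) := by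
    generalize u i = a; generalize u (i + 1) = b; revert a b; decide
  refine ⟨r, fun l hl => ?_⟩
  obtain rfl | rfl : l = 0 ∨ l = 1 := by omega
  exacts [h₀.symm, h₁.symm]

theorem windowsIn_thueMorse (n : ℕ) :
    ∀ u : ℕ → Fin 2, PowerFree (7 / 3) u → ComplClosed u → WindowsIn n u thueMorse := by
  induction n using Nat.strong_induction_on with
  | _ n ih =>
  intro u hu hc
  by_cases hn : n ≤ 2
  · exact (windowsIn_two_thueMorse u).mono hn
  obtain ⟨off, hoff, w, hw, hwf, hwc⟩ := hu.exists_shift_eq_muImage_of_complClosed hc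
  have hμ : WindowsIn n (fun i => u (off + i)) thueMorse := by
    rw [hw, ← muImage_thueMorse]
    exact (ih (n / 2 + 1) (by omega) w hwf hwc).muImage
  exact (hu.windowsIn_shift_two hc n).trans ((windowsIn_shift hoff).trans hμ)

theorem exists_thueMorse_prefix (K : ℕ) :
    ∀ u : ℕ → Fin 2, PowerFree (7 / 3) u → ComplClosed u →
      ∃ i, ∀ j < 2 ^ K, u (i + j) = thueMorse j := by
  induction K with
  | zero =>
    intro u _ hc
    obtain ⟨i', hi'⟩ := hc 1 0
    have hi'0 : u i' ≠ u 0 := by simpa using Fin.rev_eq_iff_ne_two.1 (hi' 0 one_pos)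
    obtain ⟨i, hi⟩ : ∃ i, u i = 0 := by
      by_cases h : u 0 = 0
      exacts [⟨0, h⟩, ⟨i', by omega⟩]
    refine ⟨i, fun j hj => ?_⟩
    obtain rfl : j = 0 := by simpa using hj
    exact hi
  | succ K ih =>
    intro u hu hc
    obtain ⟨off, -, w, hw, hwf, hwc⟩ := hu.exists_shift_eq_muImage_of_complClosed hc
    obtain ⟨i, hi⟩ := ih w hwf hwc
    refine ⟨off + 2 * i, fun j hj => ?_⟩
    have := muImage_window (w' := thueMorse) (j := 0) (by simpa using hi) j
      (by rw [pow_succ] at hj; omega)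
    rw [muImage_thueMorse, ← hw] at this
    simpa [add_assoc] using this

theorem thueMorse_windowsIn {u : ℕ → Fin 2} (hu : PowerFree (7 / 3) u) (hc : ComplClosed u)
    (n : ℕ) : WindowsIn n thueMorse u := by
  intro r
  obtain ⟨i, hi⟩ := exists_thueMorse_prefix (r + n) u hu hc
  exact ⟨i + r, fun l hl => by
    rw [add_assoc, hi (r + l) ((show r + l < r + n by omega).trans (Nat.lt_two_pow_self))]⟩

/-- Every (7/3)-power-free symmetric infinite binary word has the subword
complexity of the Thue–Morse word. -/
theorem symmetric_73_free_complexity (u : ℕ → Fin 2)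
    (hu : PowerFree (7 / 3) u) (hsym : SymmetricW u) :
    ∀ n, complexity u n = complexity thueMorse n := fun n =>
  complexity_eq_of_windowsIn (windowsIn_thueMorse n u hu hsym.complClosed)
    (thueMorse_windowsIn hu hsym.complClosed n)
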